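/- arXiv:1611.08415 — 4 statements merged into one kernel-verified Lean document; each statement's English description precedes it below -/
import Mathlib

section
/- The normaliser in SO(3) of the tetrahedral subgroup Â_4 (signed permutation matrices of determinant 1 whose underlying permutation is even) equals the octahedral subgroup Σ̂_4 of all signed permutation matrices of determinant 1. -/
noncomputable section

/-- `SO(3)`: the special orthogonal group of `3 × 3` real matrices. -/
abbrev SO3 := Matrix.specialOrthogonalGroup (Fin 3) ℝ

noncomputable instance : Group SO3 :=
  { (inferInstance : Monoid SO3) with
    inv := fun A => ⟨star A.1, by
      rw [Matrix.mem_specialOrthogonalGroup_iff]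
      refine ⟨Unitary.star_mem A.2.1, ?_⟩
      have h : (A.1).det = 1 := A.2.2
      rw [Matrix.star_eq_conjTranspose, Matrix.det_conjTranspose, h, star_one]⟩
    inv_mul_cancel := fun A => Subtype.ext A.2.1.1 }

open Real in
/-- The matrix of the rotation by `θ` about the z-axis. -/
def RzMat (θ : ℝ) : Matrix (Fin 3) (Fin 3) ℝ :=
  !![cos θ, -sin θ, 0;
     sin θ,  cos θ, 0;
     0, 0, 1]

lemma RzMat_mem (θ : ℝ) : RzMat θ ∈ Matrix.specialOrthogonalGroup (Fin 3) ℝ := by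
  rw [Matrix.mem_specialOrthogonalGroup_iff]
  constructor
  · rw [Matrix.mem_orthogonalGroup_iff]
    ext i j
    fin_cases i <;> fin_cases j <;>
      simp [RzMat, Matrix.mul_apply, Fin.sum_univ_succ, Matrix.star_eq_conjTranspose,
        Matrix.conjTranspose_apply, Matrix.vecHead, Matrix.vecTail] <;>
      nlinarith [Real.sin_sq_add_cos_sq θ]
  · simp [RzMat, Matrix.det_fin_three]
    nlinarith [Real.sin_sq_add_cos_sq θ]

/-- The rotation by `θ` about the z-axis, as an element of SO(3). -/
def Rz (θ : ℝ) : SO3 := ⟨RzMat θ, RzMat_mem θ⟩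

/-- The matrix `diag (1, -1, -1)`. -/
def rhoMat : Matrix (Fin 3) (Fin 3) ℝ := !![1,0,0; 0,-1,0; 0,0,-1]

lemma rhoMat_mem : rhoMat ∈ Matrix.specialOrthogonalGroup (Fin 3) ℝ := by
  rw [Matrix.mem_specialOrthogonalGroup_iff]
  constructor
  · rw [Matrix.mem_orthogonalGroup_iff]
    ext i j
    fin_cases i <;> fin_cases j <;>
      simp [rhoMat, Matrix.mul_apply, Fin.sum_univ_succ, Matrix.star_eq_conjTranspose,
        Matrix.conjTranspose_apply, Matrix.vecHead, Matrix.vecTail]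
  · simp [rhoMat, Matrix.det_fin_three]

/-- `ρ = diag (1, -1, -1)`, the rotation by `π` about the x-axis, as an element of SO(3). -/
def ρ : SO3 := ⟨rhoMat, rhoMat_mem⟩

lemma Rz_add (a b : ℝ) : Rz a * Rz b = Rz (a + b) := by
  apply Subtype.ext
  show RzMat a * RzMat b = RzMat (a + b)
  ext i j
  fin_cases i <;> fin_cases j <;>
    simp [RzMat, Matrix.mul_apply, Fin.sum_univ_succ, Matrix.vecHead, Matrix.vecTail,
      Real.cos_add, Real.sin_add] <;> ring

lemma Rz_zero : Rz 0 = 1 := by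
  apply Subtype.ext
  show RzMat 0 = 1
  ext i j
  fin_cases i <;> fin_cases j <;>
    simp [RzMat, Matrix.one_apply, Matrix.vecHead, Matrix.vecTail]

lemma rho_sq : ρ * ρ = 1 := by
  apply Subtype.ext
  show rhoMat * rhoMat = 1
  ext i j
  fin_cases i <;> fin_cases j <;>
    simp [rhoMat, Matrix.mul_apply, Fin.sum_univ_succ, Matrix.one_apply,
      Matrix.vecHead, Matrix.vecTail]

lemma Rz_rho (θ : ℝ) : Rz θ * ρ = ρ * Rz (-θ) := by
  apply Subtype.ext
  show RzMat θ * rhoMat = rhoMat * RzMat (-θ)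
  ext i j
  fin_cases i <;> fin_cases j <;>
    simp [RzMat, rhoMat, Matrix.mul_apply, Fin.sum_univ_succ,
      Matrix.vecHead, Matrix.vecTail]

lemma Rz_inv (θ : ℝ) : (Rz θ)⁻¹ = Rz (-θ) := by
  symm
  rw [eq_inv_iff_mul_eq_one, Rz_add]
  simpa using Rz_zero

lemma rho_inv : ρ⁻¹ = ρ := inv_eq_of_mul_eq_one_right rho_sq
/-- A matrix is a signed permutation matrix if all its entries are `0`, `1` or `-1`,
and it has exactly one nonzero entry in each row and in each column. -/
def IsSignedPerm (A : Matrix (Fin 3) (Fin 3) ℝ) : Prop :=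
  (∀ i j, A i j = 0 ∨ A i j = 1 ∨ A i j = -1) ∧
    (∀ i, ∃! j, A i j ≠ 0) ∧ (∀ j, ∃! i, A i j ≠ 0)

lemma isSignedPerm_one : IsSignedPerm (1 : Matrix (Fin 3) (Fin 3) ℝ) := by
  refine ⟨fun i j => ?_, fun i => ⟨i, by simp, fun j hj => ?_⟩,
    fun j => ⟨j, by simp, fun i hi => ?_⟩⟩
  · rcases eq_or_ne i j with rfl | h
    · simp
    · simp [Matrix.one_apply_ne h]
  · by_contra hne
    exact hj (Matrix.one_apply_ne (Ne.symm hne))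
  · by_contra hne
    exact hi (Matrix.one_apply_ne hne)

lemma isSignedPerm_star {A : Matrix (Fin 3) (Fin 3) ℝ} (h : IsSignedPerm A) :
    IsSignedPerm (star A) := by
  obtain ⟨h1, h2, h3⟩ := h
  refine ⟨fun i j => ?_, fun i => ?_, fun j => ?_⟩
  · simpa [Matrix.star_apply] using h1 j i
  · simpa [Matrix.star_apply] using h3 i
  · simpa [Matrix.star_apply] using h2 j

lemma mul_entry_of_row {A B : Matrix (Fin 3) (Fin 3) ℝ} {i k₀ : Fin 3}
    (hk : ∀ k, k ≠ k₀ → A i k = 0) (j : Fin 3) : (A * B) i j = A i k₀ * B k₀ j := by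
  rw [Matrix.mul_apply]
  exact Finset.sum_eq_single k₀ (fun k _ hk' => by rw [hk k hk', zero_mul]) (by simp)

lemma mul_entry_of_col {A B : Matrix (Fin 3) (Fin 3) ℝ} {j k₀ : Fin 3}
    (hk : ∀ k, k ≠ k₀ → B k j = 0) (i : Fin 3) : (A * B) i j = A i k₀ * B k₀ j := by
  rw [Matrix.mul_apply]
  exact Finset.sum_eq_single k₀ (fun k _ hk' => by rw [hk k hk', mul_zero]) (by simp)

lemma isSignedPerm_mul {A B : Matrix (Fin 3) (Fin 3) ℝ}
    (hA : IsSignedPerm A) (hB : IsSignedPerm B) : IsSignedPerm (A * B) := by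
  obtain ⟨hA1, hA2, hA3⟩ := hA
  obtain ⟨hB1, hB2, hB3⟩ := hB
  refine ⟨fun i j => ?_, fun i => ?_, fun j => ?_⟩
  · obtain ⟨k₀, hk₀, hk₀u⟩ := hA2 i
    have hzero : ∀ k, k ≠ k₀ → A i k = 0 := fun k hk => by
      by_contra h; exact hk (hk₀u k h)
    rw [mul_entry_of_row hzero]
    rcases hA1 i k₀ with h | h | h <;> rcases hB1 k₀ j with h' | h' | h' <;>
      simp [h, h']
  · obtain ⟨k₀, hk₀, hk₀u⟩ := hA2 i
    have hzero : ∀ k, k ≠ k₀ → A i k = 0 := fun k hk => by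
      by_contra h; exact hk (hk₀u k h)
    obtain ⟨j₀, hj₀, hj₀u⟩ := hB2 k₀
    refine ⟨j₀, ?_, fun j hj => ?_⟩
    · show (A * B) i j₀ ≠ 0
      rw [mul_entry_of_row hzero]
      exact mul_ne_zero hk₀ hj₀
    · have hj' : (A * B) i j ≠ 0 := hj
      rw [mul_entry_of_row hzero] at hj'
      exact hj₀u j (right_ne_zero_of_mul hj')
  · obtain ⟨k₀, hk₀, hk₀u⟩ := hB3 j
    have hzero : ∀ k, k ≠ k₀ → B k j = 0 := fun k hk => by
      by_contra h; exact hk (hk₀u k h)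
    obtain ⟨i₀, hi₀, hi₀u⟩ := hA3 k₀
    refine ⟨i₀, ?_, fun i hi => ?_⟩
    · show (A * B) i₀ j ≠ 0
      rw [mul_entry_of_col hzero]
      exact mul_ne_zero hi₀ hk₀
    · have hi' : (A * B) i j ≠ 0 := hi
      rw [mul_entry_of_col hzero] at hi'
      exact hi₀u i (left_ne_zero_of_mul hi')

/-- `Σ̂₄ ⊆ SO(3)`: the subgroup of all signed permutation matrices of determinant 1
(the rotation group of the cube). -/
def SigmaHat4 : Subgroup SO3 where
  carrier := {g | IsSignedPerm g.1}
  one_mem' := isSignedPerm_one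
  mul_mem' := fun hx hy => isSignedPerm_mul hx hy
  inv_mem' := fun hx => isSignedPerm_star hx

/-- `Â₄ ⊆ SO(3)`: the subgroup of signed permutation matrices of determinant 1 whose
underlying permutation is even (the rotation group of a regular tetrahedron). -/
def A4Hat : Subgroup SO3 where
  carrier := {g | IsSignedPerm g.1 ∧
    ∃ σ : Equiv.Perm (Fin 3), Equiv.Perm.sign σ = 1 ∧ ∀ i, g.1 i (σ i) ≠ 0}
  one_mem' := ⟨isSignedPerm_one, 1, by simp, fun i => by simp⟩
  mul_mem' := by
    rintro x y ⟨hx, σ, hσ, hxσ⟩ ⟨hy, τ, hτ, hyτ⟩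
    refine ⟨isSignedPerm_mul hx hy, σ.trans τ, ?_, fun i => ?_⟩
    · have h : σ.trans τ = τ * σ := rfl
      rw [h, Equiv.Perm.sign_mul, hσ, hτ, mul_one]
    · show (x.1 * y.1) i (σ.trans τ i) ≠ 0
      obtain ⟨k₀, hk₀, hu⟩ := hx.2.1 i
      have hσi : σ i = k₀ := hu _ (hxσ i)
      have hzero : ∀ k, k ≠ σ i → x.1 i k = 0 := by
        intro k hk
        by_contra hke
        exact hk ((hu k hke).trans hσi.symm)
      rw [mul_entry_of_row hzero]
      exact mul_ne_zero (hxσ i) (hyτ (σ i))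
  inv_mem' := by
    rintro x ⟨hx, σ, hσ, hxσ⟩
    refine ⟨isSignedPerm_star hx, σ⁻¹, by simp [hσ], fun i => ?_⟩
    show star x.1 i (σ⁻¹ i) ≠ 0
    rw [Matrix.star_apply]
    simpa using hxσ (σ⁻¹ i)


/-! ### Auxiliary lemmas for the normalizer computation -/

lemma mul_nonzero_entry {A B : Matrix (Fin 3) (Fin 3) ℝ} (hA : IsSignedPerm A)
    {i j k : Fin 3} (hAik : A i k ≠ 0) (hBkj : B k j ≠ 0) : (A * B) i j ≠ 0 := by
  have hzero : ∀ k', k' ≠ k → A i k' = 0 := by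
    intro k' hk'
    by_contra h
    obtain ⟨j0, _, hu⟩ := hA.2.1 i
    exact hk' ((hu _ h).trans (hu _ hAik).symm)
  rw [mul_entry_of_row hzero]
  exact mul_ne_zero hAik hBkj

lemma exists_perm {A : Matrix (Fin 3) (Fin 3) ℝ} (hA : IsSignedPerm A) :
    ∃ π : Equiv.Perm (Fin 3), ∀ i, A i (π i) ≠ 0 := by
  have hspec : ∀ i, A i ((hA.2.1 i).choose) ≠ 0 := fun i => (hA.2.1 i).choose_spec.1
  have hinj : Function.Injective (fun i => (hA.2.1 i).choose) := by
    intro i i' h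
    obtain ⟨r, _, hu⟩ := hA.2.2 ((hA.2.1 i).choose)
    have h1 := hu i (hspec i)
    have h2 := hu i' (by rw [show (hA.2.1 i).choose = (hA.2.1 i').choose from h]; exact hspec i')
    exact h1.trans h2.symm
  exact ⟨Equiv.ofBijective _ (Finite.injective_iff_bijective.mp hinj), hspec⟩

lemma inv_val (g : SO3) : (g⁻¹).1 = star g.1 := rfl

lemma conj_mem_A4Hat {g n : SO3} (hg : IsSignedPerm g.1) (hn : n ∈ A4Hat) :
    g * n * g⁻¹ ∈ A4Hat := by
  obtain ⟨hn1, σ, hσ, hnσ⟩ := hn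
  obtain ⟨π, hπ⟩ := exists_perm hg
  have hginv : IsSignedPerm (g⁻¹).1 := by rw [inv_val]; exact isSignedPerm_star hg
  refine ⟨isSignedPerm_mul (isSignedPerm_mul hg hn1) hginv,
    (π.trans σ).trans π.symm, ?_, fun i => ?_⟩
  · have heq : (π.trans σ).trans π.symm = π⁻¹ * (σ * π) := rfl
    rw [heq, map_mul, map_mul, map_inv, hσ]
    simp
  · show ((g.1 * n.1) * (g⁻¹).1) i (π.symm (σ (π i))) ≠ 0
    refine mul_nonzero_entry (isSignedPerm_mul hg hn1) (k := σ (π i))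
      (mul_nonzero_entry hg (hπ i) (hnσ (π i))) ?_
    rw [inv_val, Matrix.star_apply]
    simpa using hπ (π.symm (σ (π i)))

/-- The diagonal matrix with `1` in position `i` and `-1` elsewhere. -/
def DMat (i : Fin 3) : Matrix (Fin 3) (Fin 3) ℝ :=
  Matrix.diagonal (fun j => if j = i then 1 else -1)

lemma DMat_mem (i : Fin 3) : DMat i ∈ Matrix.specialOrthogonalGroup (Fin 3) ℝ := by
  rw [Matrix.mem_specialOrthogonalGroup_iff]
  constructor
  · rw [Matrix.mem_orthogonalGroup_iff, DMat,
      Matrix.diagonal_transpose, Matrix.diagonal_mul_diagonal]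
    convert Matrix.diagonal_one with j
    by_cases h : j = i <;> simp [h]
  · rw [DMat, Matrix.det_diagonal]
    rw [Fin.prod_univ_three]; fin_cases i <;> norm_num <;> decide

def Dso (i : Fin 3) : SO3 := ⟨DMat i, DMat_mem i⟩

lemma DMat_diag (i j : Fin 3) : DMat i j j = if j = i then 1 else -1 := by
  simp [DMat]

lemma DMat_off {i j k : Fin 3} (h : j ≠ k) : DMat i j k = 0 :=
  Matrix.diagonal_apply_ne _ h

lemma DMat_diag_ne_zero (i j : Fin 3) : DMat i j j ≠ 0 := by
  rw [DMat_diag]; by_cases h : j = i <;> simp [h]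

lemma isSignedPerm_DMat (i : Fin 3) : IsSignedPerm (DMat i) := by
  refine ⟨fun k j => ?_, fun k => ⟨k, DMat_diag_ne_zero i k, fun j hj => ?_⟩,
    fun j => ⟨j, DMat_diag_ne_zero i j, fun k hk => ?_⟩⟩
  · rcases eq_or_ne k j with rfl | h
    · rw [DMat_diag]; by_cases h : k = i <;> simp [h]
    · exact Or.inl (DMat_off h)
  · by_contra hne; exact hj (DMat_off (Ne.symm hne))
  · by_contra hne; exact hk (DMat_off hne)

lemma Dso_mem_A4Hat (i : Fin 3) : Dso i ∈ A4Hat :=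
  ⟨isSignedPerm_DMat i, 1, by simp, fun j => by simpa [Dso] using DMat_diag_ne_zero i j⟩

lemma Dso_sq (i : Fin 3) : Dso i * Dso i = 1 := by
  apply Subtype.ext
  show DMat i * DMat i = 1
  rw [DMat, Matrix.diagonal_mul_diagonal]
  convert Matrix.diagonal_one with j
  by_cases h : j = i <;> simp [h]

lemma Dso_ne_one (i : Fin 3) : Dso i ≠ 1 := by
  intro h
  obtain ⟨j, hj⟩ := exists_ne i
  have h1 : DMat i j j = 1 := by
    have := congrArg (fun A : SO3 => A.1 j j) h
    simpa [Dso] using this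
  rw [DMat_diag, if_neg hj] at h1
  norm_num at h1

lemma a4hat_order_two {A : SO3} (hA : A ∈ A4Hat) (h2 : A * A = 1) (h1 : A ≠ 1) :
    ∃ i, A = Dso i := by
  obtain ⟨⟨hent, hrow, hcol⟩, σ, hσ, hnz⟩ := hA
  have hAA : A.1 * A.1 = 1 := congrArg Subtype.val h2
  -- σ is an involution
  have hinv : ∀ i, σ (σ i) = i := by
    intro i
    have hzero : ∀ k, k ≠ σ i → A.1 i k = 0 := by
      intro k hk
      by_contra h
      obtain ⟨j0, _, hu⟩ := hrow i
      exact hk ((hu _ h).trans (hu _ (hnz i)).symm)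
    have hne : (A.1 * A.1) i (σ (σ i)) ≠ 0 := by
      rw [mul_entry_of_row hzero]
      exact mul_ne_zero (hnz i) (hnz (σ i))
    rw [hAA] at hne
    by_contra hc
    exact hne (Matrix.one_apply_ne (Ne.symm hc))
  have hσ1 : σ = 1 := by
    have key : ∀ τ : Equiv.Perm (Fin 3), Equiv.Perm.sign τ = 1 →
        (∀ i, τ (τ i) = i) → τ = 1 := by decide
    exact key σ hσ hinv
  subst hσ1
  -- A is diagonal
  have hdiag : ∀ i j, j ≠ i → A.1 i j = 0 := by
    intro i j hij
    by_contra h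
    obtain ⟨j0, _, hu⟩ := hrow i
    exact hij ((hu _ h).trans (hu _ (by simpa using hnz i)).symm)
  have hd : ∀ i, A.1 i i = 1 ∨ A.1 i i = -1 := by
    intro i
    rcases hent i i with h | h | h
    · exact absurd h (by simpa using hnz i)
    · exact Or.inl h
    · exact Or.inr h
  have hdet : A.1 0 0 * A.1 1 1 * A.1 2 2 = 1 := by
    have hd : (A.1).det = 1 := A.2.2
    rw [Matrix.det_fin_three, hdiag 0 1 (by decide), hdiag 0 2 (by decide),
      hdiag 1 0 (by decide), hdiag 1 2 (by decide), hdiag 2 0 (by decide),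
      hdiag 2 1 (by decide)] at hd
    linarith [hd]
  have hext : ∀ d0 d1 d2 : ℝ, A.1 0 0 = d0 → A.1 1 1 = d1 → A.1 2 2 = d2 →
      ∀ B : Matrix (Fin 3) (Fin 3) ℝ, B 0 0 = d0 → B 1 1 = d1 → B 2 2 = d2 →
      (∀ i j, j ≠ i → B i j = 0) → A.1 = B := by
    intro d0 d1 d2 h0 h1 h2 B hb0 hb1 hb2 hboff
    ext i j
    rcases eq_or_ne j i with rfl | hij
    · fin_cases j <;> simp_all
    · rw [hdiag i j hij, hboff i j hij]
  rcases hd 0 with e0 | e0 <;> rcases hd 1 with e1 | e1 <;> rcases hd 2 with e2 | e2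
  · exact absurd (Subtype.ext (show A.1 = (1 : SO3).1 from hext 1 1 1 e0 e1 e2 1 rfl rfl rfl
      (fun i j hij => Matrix.one_apply_ne (Ne.symm hij)))) h1
  · rw [e0, e1, e2] at hdet; norm_num at hdet
  · rw [e0, e1, e2] at hdet; norm_num at hdet
  · refine ⟨0, Subtype.ext (show A.1 = (Dso 0).1 from hext 1 (-1) (-1) e0 e1 e2 (DMat 0) ?_ ?_ ?_
      (fun i j hij => DMat_off (Ne.symm hij)))⟩ <;> rw [DMat_diag] <;> norm_num [Fin.ext_iff]
  · rw [e0, e1, e2] at hdet; norm_num at hdet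
  · refine ⟨1, Subtype.ext (show A.1 = (Dso 1).1 from hext (-1) 1 (-1) e0 e1 e2 (DMat 1) ?_ ?_ ?_
      (fun i j hij => DMat_off (Ne.symm hij)))⟩ <;> rw [DMat_diag] <;> norm_num [Fin.ext_iff]
  · refine ⟨2, Subtype.ext (show A.1 = (Dso 2).1 from hext (-1) (-1) 1 e0 e1 e2 (DMat 2) ?_ ?_ ?_
      (fun i j hij => DMat_off (Ne.symm hij)))⟩ <;> rw [DMat_diag] <;> norm_num [Fin.ext_iff]
  · rw [e0, e1, e2] at hdet; norm_num at hdet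

/-- The normaliser in `SO(3)` of the tetrahedral subgroup `Â₄` (signed permutation
matrices of determinant 1 with even underlying permutation) is the octahedral
subgroup `Σ̂₄` of all signed permutation matrices of determinant 1. -/
theorem normalizer_A4Hat_eq_SigmaHat4 : Subgroup.normalizer (A4Hat : Set SO3) = SigmaHat4 := by
  ext g
  rw [Subgroup.mem_normalizer_iff]
  constructor
  · intro hg
    -- conjugates of the Dso i are among the Dso j, hence g is a signed permutation
    have hconj : ∀ i : Fin 3, ∃ m : Fin 3, g * Dso i * g⁻¹ = Dso m := by
      intro i
      have hmem : g * Dso i * g⁻¹ ∈ A4Hat := (hg (Dso i)).mp (Dso_mem_A4Hat i)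
      have hsq : (g * Dso i * g⁻¹) * (g * Dso i * g⁻¹) = 1 := by
        have : (g * Dso i * g⁻¹) * (g * Dso i * g⁻¹) = g * (Dso i * Dso i) * g⁻¹ := by
          group
        rw [this, Dso_sq, mul_one, mul_inv_cancel]
      have hne : g * Dso i * g⁻¹ ≠ 1 := by
        intro h
        apply Dso_ne_one i
        have : Dso i = g⁻¹ * (g * Dso i * g⁻¹) * g := by group
        rw [this, h]
        group
      exact a4hat_order_two hmem hsq hne
    choose m hm using hconj
    have hrel : ∀ i, g.1 * DMat i = DMat (m i) * g.1 := by
      intro i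
      have : g * Dso i = Dso (m i) * g := by
        rw [← hm i]; group
      exact congrArg Subtype.val this
    -- column i of g is supported on row m i
    have hsupp : ∀ i k, k ≠ m i → g.1 k i = 0 := by
      intro i k hk
      have := congrFun (congrFun (hrel i) k) i
      simp only [DMat, Matrix.mul_diagonal, Matrix.diagonal_mul, if_true, eq_self_iff_true,
        if_neg hk, mul_one] at this
      linarith [this]
    have hortho : star g.1 * g.1 = 1 := by
      exact g.2.1.1
    have hentry : ∀ i j, (star g.1 * g.1) i j = g.1 (m i) i * g.1 (m i) j := by
      intro i j
      have hz : ∀ k, k ≠ m i → (star g.1) i k = 0 := by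
        intro k hk
        rw [Matrix.star_apply]
        simpa using hsupp i k hk
      rw [mul_entry_of_row hz, Matrix.star_apply]
      simp
    have hdiagval : ∀ i, g.1 (m i) i = 1 ∨ g.1 (m i) i = -1 := by
      intro i
      have := hentry i i
      rw [hortho, Matrix.one_apply_eq] at this
      exact mul_self_eq_one_iff.mp this.symm
    have hdnz : ∀ i, g.1 (m i) i ≠ 0 := by
      intro i
      rcases hdiagval i with h | h <;> rw [h] <;> norm_num
    have minj : Function.Injective m := by
      intro i j hij
      by_contra hne
      have := hentry i j
      rw [hortho, Matrix.one_apply_ne hne] at this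
      have hz : g.1 (m i) j = 0 := by
        rcases mul_eq_zero.mp this.symm with h | h
        · exact absurd h (hdnz i)
        · exact h
      rw [hij] at hz
      exact hdnz j hz
    have msurj : Function.Surjective m := (Finite.injective_iff_bijective.mp minj).2
    show IsSignedPerm g.1
    refine ⟨fun k j => ?_, fun k => ?_, fun j => ?_⟩
    · rcases eq_or_ne k (m j) with rfl | h
      · rcases hdiagval j with h | h <;> rw [h] <;> simp
      · exact Or.inl (hsupp j k h)
    · obtain ⟨j, rfl⟩ := msurj k
      refine ⟨j, hdnz j, fun j' hj' => ?_⟩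
      have hmm : m j = m j' := by
        by_contra h
        exact hj' (hsupp j' _ h)
      exact minj hmm.symm
    · exact ⟨m j, hdnz j, fun k hk => by
        by_contra h
        exact hk (hsupp j k h)⟩
  · intro hg n
    have hg' : IsSignedPerm g.1 := hg
    constructor
    · exact fun hn => conj_mem_A4Hat hg' hn
    · intro hn
      have hginv : IsSignedPerm (g⁻¹).1 := by rw [inv_val]; exact isSignedPerm_star hg'
      have := conj_mem_A4Hat hginv hn
      have heq : g⁻¹ * (g * n * g⁻¹) * g⁻¹⁻¹ = n := by group
      rwa [heq] at this

end
end

section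
/- Every subgroup of SO(3) of order 4 isomorphic to the Klein four group (C₂ × C₂) is conjugate in SO(3) to the standard Klein four subgroup V = {1, diag(1,−1,−1), diag(−1,1,−1), diag(−1,−1,1)}; that is, there is exactly one conjugacy class of dihedral subgroups D_4 of order 4 in SO(3). -/
noncomputable section

/-- A diagonal `3 × 3` matrix. -/
def dMat (a b c : ℝ) : Matrix (Fin 3) (Fin 3) ℝ := !![a,0,0; 0,b,0; 0,0,c]

lemma dMat_mul (a b c a' b' c' : ℝ) :
    dMat a b c * dMat a' b' c' = dMat (a * a') (b * b') (c * c') := by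
  ext i j
  fin_cases i <;> fin_cases j <;>
    simp [dMat, Matrix.mul_apply, Fin.sum_univ_succ, Matrix.vecHead, Matrix.vecTail]

lemma dMat_one : dMat 1 1 1 = 1 := by
  ext i j
  fin_cases i <;> fin_cases j <;>
    simp [dMat, Matrix.one_apply, Matrix.vecHead, Matrix.vecTail]

lemma dMat_mem (a b c : ℝ) (ha : a = 1 ∨ a = -1) (hb : b = 1 ∨ b = -1)
    (hc : c = 1 ∨ c = -1) (habc : a * b * c = 1) :
    dMat a b c ∈ Matrix.specialOrthogonalGroup (Fin 3) ℝ := by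
  rw [Matrix.mem_specialOrthogonalGroup_iff]
  constructor
  · rw [Matrix.mem_orthogonalGroup_iff]
    ext i j
    fin_cases i <;> fin_cases j <;>
      simp [dMat, Matrix.mul_apply, Fin.sum_univ_succ, Matrix.star_eq_conjTranspose,
        Matrix.conjTranspose_apply, Matrix.one_apply, Matrix.vecHead, Matrix.vecTail] <;>
      rcases ha with rfl | rfl <;> rcases hb with rfl | rfl <;>
        rcases hc with rfl | rfl <;> norm_num
  · simp [dMat, Matrix.det_fin_three]
    nlinarith [habc]

lemma rho_eq_dMat : (ρ : SO3).1 = dMat 1 (-1) (-1) := rfl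

/-- `diag (-1, 1, -1)` as an element of SO(3). -/
def ρ₂ : SO3 := ⟨dMat (-1) 1 (-1), dMat_mem _ _ _ (by norm_num) (by norm_num) (by norm_num) (by norm_num)⟩

/-- `diag (-1, -1, 1)` as an element of SO(3). -/
def ρ₃ : SO3 := ⟨dMat (-1) (-1) 1, dMat_mem _ _ _ (by norm_num) (by norm_num) (by norm_num) (by norm_num)⟩

lemma dprod₂₂ : ρ₂ * ρ₂ = 1 := by
  apply Subtype.ext
  show dMat (-1) 1 (-1) * dMat (-1) 1 (-1) = 1
  rw [dMat_mul]; norm_num [dMat_one]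

lemma dprod₃₃ : ρ₃ * ρ₃ = 1 := by
  apply Subtype.ext
  show dMat (-1) (-1) 1 * dMat (-1) (-1) 1 = 1
  rw [dMat_mul]; norm_num [dMat_one]

lemma dprod₁₂ : ρ * ρ₂ = ρ₃ := by
  apply Subtype.ext
  show dMat 1 (-1) (-1) * dMat (-1) 1 (-1) = dMat (-1) (-1) 1
  rw [dMat_mul]; norm_num

lemma dprod₂₁ : ρ₂ * ρ = ρ₃ := by
  apply Subtype.ext
  show dMat (-1) 1 (-1) * dMat 1 (-1) (-1) = dMat (-1) (-1) 1
  rw [dMat_mul]; norm_num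

lemma dprod₁₃ : ρ * ρ₃ = ρ₂ := by
  apply Subtype.ext
  show dMat 1 (-1) (-1) * dMat (-1) (-1) 1 = dMat (-1) 1 (-1)
  rw [dMat_mul]; norm_num

lemma dprod₃₁ : ρ₃ * ρ = ρ₂ := by
  apply Subtype.ext
  show dMat (-1) (-1) 1 * dMat 1 (-1) (-1) = dMat (-1) 1 (-1)
  rw [dMat_mul]; norm_num

lemma dprod₂₃ : ρ₂ * ρ₃ = ρ := by
  apply Subtype.ext
  show dMat (-1) 1 (-1) * dMat (-1) (-1) 1 = dMat 1 (-1) (-1)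
  rw [dMat_mul]; norm_num

lemma dprod₃₂ : ρ₃ * ρ₂ = ρ := by
  apply Subtype.ext
  show dMat (-1) (-1) 1 * dMat (-1) 1 (-1) = dMat 1 (-1) (-1)
  rw [dMat_mul]; norm_num

/-- The Klein four subgroup `V = {1, diag(1,-1,-1), diag(-1,1,-1), diag(-1,-1,1)}`
of SO(3) (the dihedral subgroup `D₄` of order 4). -/
def V : Subgroup SO3 where
  carrier := {1, ρ, ρ₂, ρ₃}
  one_mem' := by left; rfl
  mul_mem' := by
    rintro x y (rfl | rfl | rfl | rfl) (rfl | rfl | rfl | rfl) <;>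
      simp [Set.mem_insert_iff, one_mul, mul_one, rho_sq, dprod₂₂, dprod₃₃,
        dprod₁₂, dprod₂₁, dprod₁₃, dprod₃₁, dprod₂₃, dprod₃₂]
  inv_mem' := by
    rintro x (rfl | rfl | rfl | rfl) <;>
      simp [Set.mem_insert_iff, rho_inv, inv_eq_of_mul_eq_one_right rho_sq,
        inv_eq_of_mul_eq_one_right dprod₂₂, inv_eq_of_mul_eq_one_right dprod₃₃]


section AuxKlein
open Matrix


lemma exists_axis (M : Matrix (Fin 3) (Fin 3) ℝ)
    (horth : Mᵀ * M = 1) (hsq : M * M = 1) (hdet : M.det = 1) (hne : M ≠ 1) :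
    ∃ v : Fin 3 → ℝ, (v 0 ^ 2 + v 1 ^ 2 + v 2 ^ 2 = 1) ∧
      ∀ j l, M j l = 2 * v j * v l - (1 : Matrix (Fin 3) (Fin 3) ℝ) j l := by
  have hsymm : Mᵀ = M := by
    calc Mᵀ = Mᵀ * (M * M) := by rw [hsq, mul_one]
    _ = (Mᵀ * M) * M := by rw [mul_assoc]
    _ = M := by rw [horth, one_mul]
  have hM : M.IsHermitian := by
    rw [Matrix.IsHermitian, Matrix.conjTranspose]
    convert hsymm using 1; ext i j; simp
  set d := hM.eigenvalues with hd
  set U : Matrix (Fin 3) (Fin 3) ℝ := (hM.eigenvectorUnitary : Matrix (Fin 3) (Fin 3) ℝ) with hUdef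
  have hsU : star U = Uᵀ := by ext i j; simp [Matrix.star_apply]
  have hspec : M = U * Matrix.diagonal d * Uᵀ := by
    have h2 : (RCLike.ofReal ∘ d : Fin 3 → ℝ) = d := by ext i; simp
    rw [← hsU, ← h2]; exact hM.spectral_theorem
  have hU1 : U * Uᵀ = 1 := by
    rw [← hsU]; exact (Matrix.mem_unitaryGroup_iff).mp hM.eigenvectorUnitary.2
  have hU2 : Uᵀ * U = 1 := by
    rw [← hsU]; exact (Matrix.mem_unitaryGroup_iff').mp hM.eigenvectorUnitary.2
  -- d i * d i = 1
  have key : U * (Matrix.diagonal d * (Matrix.diagonal d * Uᵀ)) = 1 := by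
    have h := hsq
    rw [hspec] at h
    calc U * (Matrix.diagonal d * (Matrix.diagonal d * Uᵀ))
        = U * (Matrix.diagonal d * (1 * (Matrix.diagonal d * Uᵀ))) := by rw [one_mul]
      _ = U * (Matrix.diagonal d * ((Uᵀ * U) * (Matrix.diagonal d * Uᵀ))) := by rw [hU2]
      _ = U * Matrix.diagonal d * Uᵀ * (U * Matrix.diagonal d * Uᵀ) := by
            simp only [mul_assoc]
      _ = 1 := h
  have hDD : Matrix.diagonal d * Matrix.diagonal d = 1 := by
    calc Matrix.diagonal d * Matrix.diagonal d
        = 1 * (Matrix.diagonal d * Matrix.diagonal d) * 1 := by rw [one_mul, mul_one]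
      _ = (Uᵀ * U) * (Matrix.diagonal d * Matrix.diagonal d) * (Uᵀ * U) := by rw [hU2]
      _ = Uᵀ * (U * (Matrix.diagonal d * (Matrix.diagonal d * Uᵀ))) * U := by
            simp only [mul_assoc]
      _ = Uᵀ * 1 * U := by rw [key]
      _ = 1 := by rw [mul_one, hU2]
  have hdi : ∀ i, d i = 1 ∨ d i = -1 := by
    intro i
    have := congrFun (congrFun hDD i) i
    rw [Matrix.diagonal_mul_diagonal] at this
    simp [Matrix.diagonal_apply_eq, Matrix.one_apply_eq] at this
    exact mul_self_eq_one_iff.mp this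
  have hdetU : U.det * Uᵀ.det = 1 := by rw [← Matrix.det_mul, hU1, Matrix.det_one]
  have hprod : d 0 * d 1 * d 2 = 1 := by
    have : M.det = d 0 * d 1 * d 2 := by
      rw [hspec, Matrix.det_mul, Matrix.det_mul, Matrix.det_diagonal, Fin.prod_univ_three]
      linear_combination (d 0 * d 1 * d 2) * hdetU
    rw [← this, hdet]
  -- entry formulas
  have hMjl : ∀ j l, M j l = d 0 * U j 0 * U l 0 + d 1 * U j 1 * U l 1 + d 2 * U j 2 * U l 2 := by
    intro j l
    conv_lhs => rw [hspec]
    rw [Matrix.mul_apply]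
    simp [Matrix.mul_apply, Fin.sum_univ_three, Matrix.diagonal, Matrix.transpose_apply]
    ring
  have h1jl : ∀ j l, (1 : Matrix (Fin 3) (Fin 3) ℝ) j l
      = U j 0 * U l 0 + U j 1 * U l 1 + U j 2 * U l 2 := by
    intro j l
    conv_lhs => rw [← hU1]
    rw [Matrix.mul_apply, Fin.sum_univ_three]
    simp [Matrix.transpose_apply]
  have hcol : ∀ k, U 0 k ^ 2 + U 1 k ^ 2 + U 2 k ^ 2 = 1 := by
    intro k
    have := congrFun (congrFun hU2 k) k
    rw [Matrix.mul_apply, Fin.sum_univ_three] at this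
    simp [Matrix.transpose_apply] at this
    nlinarith [this]
  rcases hdi 0 with h0 | h0 <;> rcases hdi 1 with h1 | h1 <;> rcases hdi 2 with h2 | h2
  · -- all 1: M = 1
    exfalso; apply hne
    ext j l
    rw [hMjl j l, h1jl j l, h0, h1, h2]; ring
  · rw [h0, h1, h2] at hprod; norm_num at hprod
  · rw [h0, h1, h2] at hprod; norm_num at hprod
  · exact ⟨fun j => U j 0, by simpa using hcol 0, fun j l => by
      rw [hMjl j l, h1jl j l, h0, h1, h2]; ring⟩
  · rw [h0, h1, h2] at hprod; norm_num at hprod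
  · exact ⟨fun j => U j 1, by simpa using hcol 1, fun j l => by
      rw [hMjl j l, h1jl j l, h0, h1, h2]; ring⟩
  · exact ⟨fun j => U j 2, by simpa using hcol 2, fun j l => by
      rw [hMjl j l, h1jl j l, h0, h1, h2]; ring⟩
  · rw [h0, h1, h2] at hprod; norm_num at hprod


lemma finmk2 : (⟨2, by norm_num⟩ : Fin 3) = 2 := rfl

lemma axes_orth (A B : Matrix (Fin 3) (Fin 3) ℝ) (v w : Fin 3 → ℝ)
    (hv : v 0 ^ 2 + v 1 ^ 2 + v 2 ^ 2 = 1) (hw : w 0 ^ 2 + w 1 ^ 2 + w 2 ^ 2 = 1)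
    (hA : ∀ j l, A j l = 2 * v j * v l - (1 : Matrix (Fin 3) (Fin 3) ℝ) j l)
    (hB : ∀ j l, B j l = 2 * w j * w l - (1 : Matrix (Fin 3) (Fin 3) ℝ) j l)
    (hcomm : A * B = B * A) (hne : A ≠ B) :
    v 0 * w 0 + v 1 * w 1 + v 2 * w 2 = 0 := by
  set t : ℝ := v 0 * w 0 + v 1 * w 1 + v 2 * w 2 with htdef
  have E : ∀ j l : Fin 3, t * (v j * w l - w j * v l) = 0 := by
    intro j l
    have h := congrFun (congrFun hcomm j) l
    rw [Matrix.mul_apply, Matrix.mul_apply, Fin.sum_univ_three, Fin.sum_univ_three] at h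
    simp only [hA, hB, Matrix.one_apply] at h
    rw [htdef]
    fin_cases j <;> fin_cases l <;>
      simp only [Fin.mk_zero, Fin.mk_one, finmk2] at h ⊢ <;>
      first
        | ring1
        | (norm_num [Fin.ext_iff] at h; linear_combination h / 4)
  have K : ∀ j : Fin 3, t * (t * v j - w j) = 0 := by
    intro j
    have e0 := E j 0; have e1 := E j 1; have e2 := E j 2
    rw [htdef] at e0 e1 e2 ⊢
    linear_combination v 0 * e0 + v 1 * e1 + v 2 * e2 +
      ((v 0 * w 0 + v 1 * w 1 + v 2 * w 2) * w j) * hv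
  by_contra ht
  have hw' : ∀ j : Fin 3, w j = t * v j := by
    intro j
    rcases mul_eq_zero.mp (K j) with h | h
    · exact absurd h ht
    · linarith
  have ht2 : t ^ 2 = 1 := by
    have hw2 : (t * v 0) ^ 2 + (t * v 1) ^ 2 + (t * v 2) ^ 2 = 1 := by
      rw [← hw' 0, ← hw' 1, ← hw' 2]; exact hw
    linear_combination hw2 - t ^ 2 * hv
  apply hne
  ext j l
  rw [hA, hB, hw' j, hw' l]
  linear_combination (-2 * v j * v l) * ht2

/-- The matrix with columns `v`, `w`, `v × w`. -/
def gMat (v w : Fin 3 → ℝ) : Matrix (Fin 3) (Fin 3) ℝ :=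
  !![v 0, w 0, v 1 * w 2 - v 2 * w 1;
     v 1, w 1, v 2 * w 0 - v 0 * w 2;
     v 2, w 2, v 0 * w 1 - v 1 * w 0]

lemma gMat_orth (v w : Fin 3 → ℝ)
    (hv : v 0 ^ 2 + v 1 ^ 2 + v 2 ^ 2 = 1) (hw : w 0 ^ 2 + w 1 ^ 2 + w 2 ^ 2 = 1)
    (hvw : v 0 * w 0 + v 1 * w 1 + v 2 * w 2 = 0) :
    (gMat v w)ᵀ * gMat v w = 1 := by
  ext i j
  fin_cases i <;> fin_cases j <;>
    simp [gMat, Matrix.mul_apply, Fin.sum_univ_three, Matrix.one_apply,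
      Matrix.vecHead, Matrix.vecTail] <;>
    first
      | ring1
      | linear_combination hv
      | linear_combination -hv
      | linear_combination hw
      | linear_combination -hw
      | linear_combination hvw
      | linear_combination -hvw
      | linear_combination (w 0 ^ 2 + w 1 ^ 2 + w 2 ^ 2) * hv + hw -
      (v 0 * w 0 + v 1 * w 1 + v 2 * w 2) * hvw
      | linear_combination -((w 0 ^ 2 + w 1 ^ 2 + w 2 ^ 2) * hv + hw -
          (v 0 * w 0 + v 1 * w 1 + v 2 * w 2) * hvw)

lemma gMat_det (v w : Fin 3 → ℝ)
    (hv : v 0 ^ 2 + v 1 ^ 2 + v 2 ^ 2 = 1) (hw : w 0 ^ 2 + w 1 ^ 2 + w 2 ^ 2 = 1)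
    (hvw : v 0 * w 0 + v 1 * w 1 + v 2 * w 2 = 0) :
    (gMat v w).det = 1 := by
  simp [gMat, Matrix.det_fin_three]
  linear_combination (w 0 ^ 2 + w 1 ^ 2 + w 2 ^ 2) * hv + hw -
    (v 0 * w 0 + v 1 * w 1 + v 2 * w 2) * hvw

lemma gMat_mem (v w : Fin 3 → ℝ)
    (hv : v 0 ^ 2 + v 1 ^ 2 + v 2 ^ 2 = 1) (hw : w 0 ^ 2 + w 1 ^ 2 + w 2 ^ 2 = 1)
    (hvw : v 0 * w 0 + v 1 * w 1 + v 2 * w 2 = 0) :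
    gMat v w ∈ Matrix.specialOrthogonalGroup (Fin 3) ℝ := by
  rw [Matrix.mem_specialOrthogonalGroup_iff]
  refine ⟨?_, gMat_det v w hv hw hvw⟩
  rw [Matrix.mem_orthogonalGroup_iff']
  have h : star (gMat v w) = (gMat v w)ᵀ := by ext i j; simp [Matrix.star_apply]
  exact gMat_orth v w hv hw hvw

lemma gMat_mulT (v w : Fin 3 → ℝ)
    (hv : v 0 ^ 2 + v 1 ^ 2 + v 2 ^ 2 = 1) (hw : w 0 ^ 2 + w 1 ^ 2 + w 2 ^ 2 = 1)
    (hvw : v 0 * w 0 + v 1 * w 1 + v 2 * w 2 = 0) :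
    gMat v w * (gMat v w)ᵀ = 1 :=
  mul_eq_one_comm.mp (gMat_orth v w hv hw hvw)

lemma gMat_conj_rho (v w : Fin 3 → ℝ) (M : Matrix (Fin 3) (Fin 3) ℝ)
    (hv : v 0 ^ 2 + v 1 ^ 2 + v 2 ^ 2 = 1) (hw : w 0 ^ 2 + w 1 ^ 2 + w 2 ^ 2 = 1)
    (hvw : v 0 * w 0 + v 1 * w 1 + v 2 * w 2 = 0)
    (hM : ∀ j l, M j l = 2 * v j * v l - (1 : Matrix (Fin 3) (Fin 3) ℝ) j l) :
    gMat v w * rhoMat * (gMat v w)ᵀ = M := by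
  have hggT := gMat_mulT v w hv hw hvw
  ext j l
  have h1 := congrFun (congrFun hggT j) l
  rw [hM]
  fin_cases j <;> fin_cases l <;>
    simp [gMat, rhoMat, Matrix.mul_apply, Fin.sum_univ_three, Matrix.one_apply,
      Matrix.vecHead, Matrix.vecTail] at h1 ⊢ <;>
    first
      | ring1
      | linear_combination h1
      | linear_combination -h1

lemma gMat_conj_rho₂ (v w : Fin 3 → ℝ) (N : Matrix (Fin 3) (Fin 3) ℝ)
    (hv : v 0 ^ 2 + v 1 ^ 2 + v 2 ^ 2 = 1) (hw : w 0 ^ 2 + w 1 ^ 2 + w 2 ^ 2 = 1)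
    (hvw : v 0 * w 0 + v 1 * w 1 + v 2 * w 2 = 0)
    (hN : ∀ j l, N j l = 2 * w j * w l - (1 : Matrix (Fin 3) (Fin 3) ℝ) j l) :
    gMat v w * dMat (-1) 1 (-1) * (gMat v w)ᵀ = N := by
  have hggT := gMat_mulT v w hv hw hvw
  ext j l
  have h1 := congrFun (congrFun hggT j) l
  rw [hN]
  fin_cases j <;> fin_cases l <;>
    simp [gMat, dMat, Matrix.mul_apply, Fin.sum_univ_three, Matrix.one_apply,
      Matrix.vecHead, Matrix.vecTail] at h1 ⊢ <;>
    first
      | ring1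
      | linear_combination h1
      | linear_combination -h1

end AuxKlein

lemma mem_V_iff (x : SO3) : x ∈ V ↔ x = 1 ∨ x = ρ ∨ x = ρ₂ ∨ x = ρ₃ := by
  change x ∈ ({1, ρ, ρ₂, ρ₃} : Set SO3) ↔ _
  simp [Set.mem_insert_iff]

open Matrix in
lemma SO3_transpose_mul (X : SO3) : (X.1)ᵀ * X.1 = 1 := by
  have h : star X.1 * X.1 = 1 := X.2.1.1
  have hs : star X.1 = (X.1)ᵀ := by ext i j; simp [Matrix.star_apply]
  rwa [hs] at h

open Matrix in
lemma conj_core (H : Subgroup SO3) (A B : SO3) (hAH : A ∈ H) (hBH : B ∈ H)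
    (hA1 : A ≠ 1) (hB1 : B ≠ 1) (hAB : A ≠ B) (hA2 : A * A = 1) (hB2 : B * B = 1)
    (hcommAB : A * B = B * A) (hHsub : ∀ x ∈ H, x = 1 ∨ x = A ∨ x = B ∨ x = A * B) :
    ∃ g : SO3, Subgroup.map (MulAut.conj g).toMonoidHom H = V := by
  have hAne1 : A.1 ≠ 1 := fun h => hA1 (Subtype.ext h)
  have hBne1 : B.1 ≠ 1 := fun h => hB1 (Subtype.ext h)
  obtain ⟨v, hv, hvf⟩ := exists_axis A.1 (SO3_transpose_mul A)
    (congrArg Subtype.val hA2) A.2.2 hAne1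
  obtain ⟨w, hw, hwf⟩ := exists_axis B.1 (SO3_transpose_mul B)
    (congrArg Subtype.val hB2) B.2.2 hBne1
  have hMN : A.1 ≠ B.1 := fun h => hAB (Subtype.ext h)
  have hcommM : A.1 * B.1 = B.1 * A.1 := congrArg Subtype.val hcommAB
  have hvw := axes_orth A.1 B.1 v w hv hw hvf hwf hcommM hMN
  set g : SO3 := ⟨gMat v w, gMat_mem v w hv hw hvw⟩ with hgdef
  have hginvT : (g⁻¹ : SO3).1 = (gMat v w)ᵀ := by
    show star (gMat v w) = (gMat v w)ᵀ
    ext i j; simp [Matrix.star_apply]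
  have hconjA : g * ρ * g⁻¹ = A := by
    apply Subtype.ext
    show g.1 * ρ.1 * (g⁻¹ : SO3).1 = A.1
    rw [hginvT]
    exact gMat_conj_rho v w A.1 hv hw hvw hvf
  have hconjB : g * ρ₂ * g⁻¹ = B := by
    apply Subtype.ext
    show g.1 * ρ₂.1 * (g⁻¹ : SO3).1 = B.1
    rw [hginvT]
    exact gMat_conj_rho₂ v w B.1 hv hw hvw hwf
  refine ⟨g⁻¹, ?_⟩
  have hcA : (MulAut.conj g⁻¹) A = ρ := by
    rw [MulAut.conj_apply, ← hconjA]; group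
  have hcB : (MulAut.conj g⁻¹) B = ρ₂ := by
    rw [MulAut.conj_apply, ← hconjB]; group
  have hcAB : (MulAut.conj g⁻¹) (A * B) = ρ₃ := by
    rw [_root_.map_mul, hcA, hcB, dprod₁₂]
  apply le_antisymm
  · rintro x ⟨y, hy, rfl⟩
    rcases hHsub y hy with rfl | rfl | rfl | rfl
    · simp [mem_V_iff]
    · simp only [MulEquiv.coe_toMonoidHom]
      rw [hcA, mem_V_iff]; tauto
    · simp only [MulEquiv.coe_toMonoidHom]
      rw [hcB, mem_V_iff]; tauto
    · simp only [MulEquiv.coe_toMonoidHom]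
      rw [hcAB, mem_V_iff]; tauto
  · intro x hx
    rcases (mem_V_iff x).mp hx with rfl | rfl | rfl | rfl
    · exact ⟨1, H.one_mem, map_one _⟩
    · exact ⟨A, hAH, hcA⟩
    · exact ⟨B, hBH, hcB⟩
    · exact ⟨A * B, H.mul_mem hAH hBH, hcAB⟩

/-- Every subgroup of `SO(3)` of order 4 isomorphic to the Klein four group `C₂ × C₂`
is conjugate in `SO(3)` to the standard Klein four subgroup
`V = {1, diag(1,-1,-1), diag(-1,1,-1), diag(-1,-1,1)}`; i.e. there is exactly one
conjugacy class of dihedral subgroups `D₄` of order 4 in `SO(3)`. -/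
theorem klein_four_subgroup_conjugate_to_V (H : Subgroup SO3) (hcard : Nat.card H = 4)
    (hiso : Nonempty (H ≃* Multiplicative (ZMod 2) × Multiplicative (ZMod 2))) :
    ∃ g : SO3, Subgroup.map (MulAut.conj g).toMonoidHom H = V := by
  obtain ⟨e⟩ := hiso
  let a₁ : Multiplicative (ZMod 2) × Multiplicative (ZMod 2) := (Multiplicative.ofAdd 1, 1)
  let a₂ : Multiplicative (ZMod 2) × Multiplicative (ZMod 2) := (1, Multiplicative.ofAdd 1)
  have hK : ∀ k : Multiplicative (ZMod 2) × Multiplicative (ZMod 2),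
      k = 1 ∨ k = a₁ ∨ k = a₂ ∨ k = a₁ * a₂ := by decide
  have hcoe : ∀ k : Multiplicative (ZMod 2) × Multiplicative (ZMod 2),
      ((e.symm k : H) : SO3) = 1 → k = 1 := by
    intro k h
    have h1 : e.symm k = 1 := Subtype.ext h
    have := congrArg e h1
    simpa using this
  have hA1 : ((e.symm a₁ : H) : SO3) ≠ 1 := fun h => absurd (hcoe a₁ h) (by decide)
  have hB1 : ((e.symm a₂ : H) : SO3) ≠ 1 := fun h => absurd (hcoe a₂ h) (by decide)
  have hAB : ((e.symm a₁ : H) : SO3) ≠ ((e.symm a₂ : H) : SO3) := by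
    intro h
    have h1 : e.symm a₁ = e.symm a₂ := Subtype.ext h
    have := e.symm.injective h1
    exact absurd this (by decide)
  have hA2 : ((e.symm a₁ : H) : SO3) * ((e.symm a₂ : H) : SO3) = ((e.symm (a₁ * a₂) : H) : SO3) := by
    rw [map_mul]; rfl
  have hsq : ∀ k : Multiplicative (ZMod 2) × Multiplicative (ZMod 2), k * k = 1 →
      ((e.symm k : H) : SO3) * ((e.symm k : H) : SO3) = 1 := by
    intro k hk
    have : e.symm k * e.symm k = 1 := by rw [← map_mul, hk, map_one]
    exact congrArg Subtype.val this
  have hcomm : ((e.symm a₁ : H) : SO3) * ((e.symm a₂ : H) : SO3)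
      = ((e.symm a₂ : H) : SO3) * ((e.symm a₁ : H) : SO3) := by
    have : e.symm a₁ * e.symm a₂ = e.symm a₂ * e.symm a₁ := by
      rw [← map_mul, ← map_mul, mul_comm]
    exact congrArg Subtype.val this
  have hHsub : ∀ x ∈ H, x = 1 ∨ x = ((e.symm a₁ : H) : SO3) ∨ x = ((e.symm a₂ : H) : SO3)
      ∨ x = ((e.symm a₁ : H) : SO3) * ((e.symm a₂ : H) : SO3) := by
    intro x hx
    have hx2 : (⟨x, hx⟩ : H) = e.symm (e ⟨x, hx⟩) := by simp
    rcases hK (e ⟨x, hx⟩) with h | h | h | h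
    · left
      rw [h, map_one] at hx2
      exact congrArg Subtype.val hx2
    · right; left
      rw [h] at hx2
      exact congrArg Subtype.val hx2
    · right; right; left
      rw [h] at hx2
      exact congrArg Subtype.val hx2
    · right; right; right
      rw [h, map_mul] at hx2
      exact congrArg Subtype.val hx2
  exact conj_core H _ _ (e.symm a₁).2 (e.symm a₂).2 hA1 hB1 hAB
    (hsq a₁ (by decide)) (hsq a₂ (by decide)) hcomm hHsub

end
end

section
/- For every natural number n > 2, the normaliser in SO(3) of the standard dihedral subgroup D_{2n} is contained in the standard embedded O(2); hence N_{O(2)}(D_{2n}) = N_{SO(3)}(D_{2n}), i.e. the normaliser of D_{2n} computed in the subgroup O(2) coincides with its normaliser computed in SO(3). -/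
noncomputable section

/-- The standard maximal torus `SO(2) ⊆ SO(3)`, consisting of all rotations
about the z-axis. -/
def SO2 : Subgroup SO3 where
  carrier := Set.range Rz
  one_mem' := ⟨0, Rz_zero⟩
  mul_mem' := by
    rintro _ _ ⟨a, rfl⟩ ⟨b, rfl⟩
    exact ⟨a + b, (Rz_add a b).symm⟩
  inv_mem' := by
    rintro _ ⟨a, rfl⟩
    exact ⟨-a, (Rz_inv a).symm⟩

/-- The standard embedded `O(2) ⊆ SO(3)`, consisting of all `Rz θ` together with
all `ρ * Rz θ`. -/
def O2 : Subgroup SO3 where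
  carrier := {g | ∃ θ : ℝ, g = Rz θ ∨ g = ρ * Rz θ}
  one_mem' := ⟨0, Or.inl Rz_zero.symm⟩
  mul_mem' := by
    rintro x y ⟨a, (rfl | rfl)⟩ ⟨b, (rfl | rfl)⟩
    · exact ⟨a + b, Or.inl (Rz_add a b)⟩
    · refine ⟨-a + b, Or.inr ?_⟩
      rw [← mul_assoc, Rz_rho, mul_assoc, Rz_add]
    · refine ⟨a + b, Or.inr ?_⟩
      rw [mul_assoc, Rz_add]
    · refine ⟨-a + b, Or.inl ?_⟩
      rw [← mul_assoc, mul_assoc ρ (Rz a) ρ, Rz_rho, ← mul_assoc, rho_sq,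
        one_mul, Rz_add]
  inv_mem' := by
    rintro x ⟨a, (rfl | rfl)⟩
    · exact ⟨-a, Or.inl (Rz_inv a)⟩
    · refine ⟨a, Or.inr ?_⟩
      rw [mul_inv_rev, Rz_inv, rho_inv, Rz_rho, neg_neg]
/-- The standard dihedral subgroup `D_{2n} ⊆ SO(3)` of order `2n`,
generated by `Rz (2π/n)` and `ρ`. -/
def D2n (n : ℕ) : Subgroup SO3 := Subgroup.closure {Rz (2 * Real.pi / n), ρ}


lemma SO3.coe_mul (x y : SO3) : ((x * y : SO3) : Matrix (Fin 3) (Fin 3) ℝ) = x.1 * y.1 := rfl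

lemma SO3.coe_inv (g : SO3) : ((g⁻¹ : SO3) : Matrix (Fin 3) (Fin 3) ℝ) = star g.1 := rfl

lemma D2n_le_O2 (n : ℕ) : D2n n ≤ O2 := by
  rw [D2n, Subgroup.closure_le]
  intro x hx
  rcases hx with rfl | rfl
  · exact ⟨2 * Real.pi / n, Or.inl rfl⟩
  · exact ⟨0, Or.inr (by rw [Rz_zero, mul_one])⟩

lemma trace_conj (g h : SO3) :
    Matrix.trace ((g * h * g⁻¹ : SO3) : Matrix (Fin 3) (Fin 3) ℝ) = Matrix.trace h.1 := by
  have h1 : star g.1 * g.1 = 1 := g.2.1.1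
  have : ((g * h * g⁻¹ : SO3) : Matrix (Fin 3) (Fin 3) ℝ) = g.1 * h.1 * star g.1 := rfl
  rw [this, Matrix.trace_mul_comm, ← mul_assoc, h1, one_mul]

lemma trace_RzMat (θ : ℝ) : Matrix.trace (RzMat θ) = 2 * Real.cos θ + 1 := by
  simp [RzMat, Matrix.trace_fin_three]
  ring

lemma trace_rho_RzMat (θ : ℝ) : Matrix.trace (rhoMat * RzMat θ) = -1 := by
  simp [rhoMat, RzMat, Matrix.trace_fin_three, Matrix.mul_apply, Fin.sum_univ_three,
    Matrix.vecHead, Matrix.vecTail]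

lemma cos_bounds (n : ℕ) (hn : 2 < n) :
    -1 < Real.cos (2 * Real.pi / n) ∧ Real.cos (2 * Real.pi / n) < 1 := by
  have hπ := Real.pi_pos
  have hn3 : (3 : ℝ) ≤ n := by exact_mod_cast hn
  have hpos : 0 < 2 * Real.pi / n := by positivity
  have hlt : 2 * Real.pi / n < Real.pi := by
    rw [div_lt_iff₀ (by linarith)]
    nlinarith
  constructor
  · have := Real.cos_lt_cos_of_nonneg_of_le_pi (le_of_lt hpos) le_rfl hlt
    rwa [Real.cos_pi] at this
  · have := Real.cos_lt_cos_of_nonneg_of_le_pi le_rfl (le_of_lt hlt) hpos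
    rwa [Real.cos_zero] at this

/-- Any element of the normaliser of `D2n n` has vanishing `(0,2)` and `(1,2)` entries. -/
lemma normalizer_entries (n : ℕ) (hn : 2 < n) (g : SO3) (hg : g ∈ Subgroup.normalizer (D2n n : Set SO3)) :
    g.1 0 2 = 0 ∧ g.1 1 2 = 0 := by
  set a := 2 * Real.pi / n with ha
  obtain ⟨hcos1, hcos2⟩ := cos_bounds n hn
  have hmem : Rz a ∈ D2n n := Subgroup.subset_closure (Set.mem_insert _ _)
  have hc : g * Rz a * g⁻¹ ∈ D2n n := (Subgroup.mem_normalizer_iff.mp hg _).mp hmem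
  have hcO2 : g * Rz a * g⁻¹ ∈ O2 := D2n_le_O2 n hc
  have htr : Matrix.trace ((g * Rz a * g⁻¹ : SO3) : Matrix (Fin 3) (Fin 3) ℝ)
      = 2 * Real.cos a + 1 := by
    rw [trace_conj]
    exact trace_RzMat a
  obtain ⟨θ, hθ | hθ⟩ := hcO2
  · -- conjugate is a rotation `Rz θ` with `cos θ = cos a < 1`
    have htr2 : 2 * Real.cos θ + 1 = 2 * Real.cos a + 1 := by
      rw [← trace_RzMat θ, ← htr, hθ]
      rfl
    have hcosθ : Real.cos θ = Real.cos a := by linarith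
    have hmul : g * Rz a = Rz θ * g := by
      have := congrArg (· * g) hθ
      simpa [mul_assoc] using this
    have hM : g.1 * RzMat a = RzMat θ * g.1 := congrArg Subtype.val hmul
    have h0 := congr_fun (congr_fun hM 0) 2
    have h1 := congr_fun (congr_fun hM 1) 2
    simp [Matrix.mul_apply, Fin.sum_univ_three, RzMat, Matrix.vecHead, Matrix.vecTail] at h0 h1
    set x := g.1 0 2
    set y := g.1 1 2
    have e : (1 - Real.cos θ) * (x ^ 2 + y ^ 2) = 0 := by linear_combination x * h0 + y * h1
    have hxy : x ^ 2 + y ^ 2 = 0 := by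
      rcases mul_eq_zero.mp e with h | h
      · exfalso
        rw [hcosθ] at h
        linarith
      · exact h
    constructor <;> nlinarith [sq_nonneg x, sq_nonneg y]
  · exfalso
    have htr2 : Matrix.trace ((g * Rz a * g⁻¹ : SO3) : Matrix (Fin 3) (Fin 3) ℝ) = -1 := by
      have hcoe : ((ρ * Rz θ : SO3) : Matrix (Fin 3) (Fin 3) ℝ) = rhoMat * RzMat θ := rfl
      rw [hθ, hcoe]
      exact trace_rho_RzMat θ
    rw [htr] at htr2
    linarith

/-- An element of `SO(3)` whose last row and column are `(0,0,1)` is a rotation `Rz θ`. -/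
lemma eq_Rz_of_entries (g : SO3) (h02 : g.1 0 2 = 0) (h12 : g.1 1 2 = 0)
    (h20 : g.1 2 0 = 0) (h21 : g.1 2 1 = 0) (h22 : g.1 2 2 = 1) :
    ∃ θ, g = Rz θ := by
  have horth : star g.1 * g.1 = 1 := g.2.1.1
  have hdet : g.1.det = 1 := g.2.2
  set p := g.1 0 0 with hp
  set q := g.1 0 1 with hq'
  set r := g.1 1 0 with hr
  set s := g.1 1 1 with hs'
  have e00 := congr_fun (congr_fun horth 0) 0
  have e01 := congr_fun (congr_fun horth 0) 1
  simp [Matrix.mul_apply, Fin.sum_univ_three, Matrix.star_apply, Matrix.one_apply,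
    h20, h21, ← hp, ← hq', ← hr, ← hs'] at e00 e01
  have hd : p * s - q * r = 1 := by
    rw [Matrix.det_fin_three] at hdet
    rw [← hp, ← hq', ← hr, ← hs', h02, h12, h20, h21, h22] at hdet
    ring_nf at hdet ⊢
    linarith
  -- e00 : p * p + r * r = 1,  e01 : p * q + r * s = 0
  have hs : s = p := by linear_combination p * hd + r * e01 - s * e00
  have hq : q = -r := by linear_combination p * e01 - q * e00 - r * hd
  have habs : ‖(p : ℂ) + r * Complex.I‖ = 1 := by
    rw [Complex.norm_add_mul_I]
    rw [show p ^ 2 + r ^ 2 = 1 by nlinarith [e00]]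
    exact Real.sqrt_one
  have hz : ((p : ℂ) + r * Complex.I) ≠ 0 := by
    intro h
    rw [h] at habs
    simp at habs
  refine ⟨Complex.arg ((p : ℂ) + r * Complex.I), ?_⟩
  have hcos : Real.cos (Complex.arg ((p : ℂ) + r * Complex.I)) = p := by
    rw [Complex.cos_arg hz, habs]
    simp
  have hsin : Real.sin (Complex.arg ((p : ℂ) + r * Complex.I)) = r := by
    rw [Complex.sin_arg, habs]
    simp
  apply Subtype.ext
  show g.1 = RzMat _
  ext i j
  fin_cases i <;> fin_cases j <;>
    simp [RzMat, hcos, hsin, Matrix.vecHead, Matrix.vecTail] <;>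
    first
      | exact h02 | exact h12 | exact h20 | exact h21 | exact h22
      | rw [← hp] | (rw [← hq']; rw [hq]) | rw [← hr] | (rw [← hs']; rw [hs])

/-- For every `n > 2`, the normaliser in `SO(3)` of the standard dihedral subgroup
`D_{2n}` is contained in the standard embedded `O(2)`; hence the normaliser of
`D_{2n}` computed in `O(2)` coincides with its normaliser computed in `SO(3)`. -/
theorem normalizer_D2n_le_O2 (n : ℕ) (hn : 2 < n) :
    Subgroup.normalizer (D2n n : Set SO3) ≤ O2 ∧
      Subgroup.normalizer (((D2n n).subgroupOf O2 : Subgroup O2) : Set O2) = (Subgroup.normalizer (D2n n : Set SO3)).subgroupOf O2 := by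
  have hle : Subgroup.normalizer (D2n n : Set SO3) ≤ O2 := by
    intro g hg
    obtain ⟨h02, h12⟩ := normalizer_entries n hn g hg
    obtain ⟨h02', h12'⟩ := normalizer_entries n hn g⁻¹ (inv_mem hg)
    have h20 : g.1 2 0 = 0 := by
      have : ((g⁻¹ : SO3) : Matrix (Fin 3) (Fin 3) ℝ) 0 2 = g.1 2 0 := by
        rw [SO3.coe_inv, Matrix.star_apply]
        simp
      rwa [this] at h02'
    have h21 : g.1 2 1 = 0 := by
      have : ((g⁻¹ : SO3) : Matrix (Fin 3) (Fin 3) ℝ) 1 2 = g.1 2 1 := by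
        rw [SO3.coe_inv, Matrix.star_apply]
        simp
      rwa [this] at h12'
    have horth : star g.1 * g.1 = 1 := g.2.1.1
    have e22 := congr_fun (congr_fun horth 2) 2
    simp [Matrix.mul_apply, Fin.sum_univ_three, Matrix.star_apply, Matrix.one_apply,
      h02, h12] at e22
    -- e22 : g.1 2 2 * g.1 2 2 = 1
    have h22sq : g.1 2 2 = 1 ∨ g.1 2 2 = -1 := by
      rcases mul_self_eq_one_iff.mp e22 with h | h
      · exact Or.inl h
      · exact Or.inr h
    rcases h22sq with h22 | h22
    · obtain ⟨θ, hθ⟩ := eq_Rz_of_entries g h02 h12 h20 h21 h22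
      exact ⟨θ, Or.inl hθ⟩
    · have hρ : ρ ∈ Subgroup.normalizer (D2n n : Set SO3) :=
        Subgroup.le_normalizer (Subgroup.subset_closure (Set.mem_insert_of_mem _ rfl))
      have hg' : ρ * g ∈ Subgroup.normalizer (D2n n : Set SO3) := mul_mem hρ hg
      have hcoe : ((ρ * g : SO3) : Matrix (Fin 3) (Fin 3) ℝ) = rhoMat * g.1 := rfl
      have k02 : (ρ * g : SO3).1 0 2 = 0 := by
        rw [hcoe]
        simp [rhoMat, Matrix.mul_apply, Fin.sum_univ_three, Matrix.vecHead, Matrix.vecTail, h02]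
      have k12 : (ρ * g : SO3).1 1 2 = 0 := by
        rw [hcoe]
        simp [rhoMat, Matrix.mul_apply, Fin.sum_univ_three, Matrix.vecHead, Matrix.vecTail, h12]
      have k20 : (ρ * g : SO3).1 2 0 = 0 := by
        rw [hcoe]
        simp [rhoMat, Matrix.mul_apply, Fin.sum_univ_three, Matrix.vecHead, Matrix.vecTail, h20]
      have k21 : (ρ * g : SO3).1 2 1 = 0 := by
        rw [hcoe]
        simp [rhoMat, Matrix.mul_apply, Fin.sum_univ_three, Matrix.vecHead, Matrix.vecTail, h21]
      have k22 : (ρ * g : SO3).1 2 2 = 1 := by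
        rw [hcoe]
        simp [rhoMat, Matrix.mul_apply, Fin.sum_univ_three, Matrix.vecHead, Matrix.vecTail, h22]
      obtain ⟨θ, hθ⟩ := eq_Rz_of_entries (ρ * g) k02 k12 k20 k21 k22
      refine ⟨θ, Or.inr ?_⟩
      rw [← hθ, ← mul_assoc, rho_sq, one_mul]
  refine ⟨hle, ?_⟩
  have hD : D2n n ≤ O2 := D2n_le_O2 n
  ext x
  simp only [Subgroup.mem_subgroupOf, Subgroup.mem_normalizer_iff]
  constructor
  · intro h h'
    constructor
    · intro hh
      have := (h ⟨h', hD hh⟩).mp (by simpa [Subgroup.mem_subgroupOf] using hh)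
      simpa [Subgroup.mem_subgroupOf] using this
    · intro hh
      have hconjO2 : (x : SO3) * h' * (x : SO3)⁻¹ ∈ O2 := hD hh
      have hh'O2 : h' ∈ O2 := by
        have : h' = (x : SO3)⁻¹ * ((x : SO3) * h' * (x : SO3)⁻¹) * (x : SO3) := by group
        rw [this]
        exact mul_mem (mul_mem (inv_mem x.2) hconjO2) x.2
      have := (h ⟨h', hh'O2⟩).mpr (by simpa [Subgroup.mem_subgroupOf] using hh)
      simpa [Subgroup.mem_subgroupOf] using this
  · intro h b
    constructor
    · intro hb
      simpa using (h (b : SO3)).mp hb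
    · intro hb
      exact (h (b : SO3)).mpr (by simpa using hb)

end
end

section
/- For every natural number n > 2 and every g ∈ SO(3), if the conjugate g·D_{2n}·g⁻¹ of the standard dihedral subgroup D_{2n} is contained in the standard embedded O(2), then g itself lies in the standard embedded O(2). Equivalently, if g ∈ SO(3) does not lie in O(2) then g·D_{2n}·g⁻¹ is not contained in O(2). -/
noncomputable section

/-- A special orthogonal matrix whose last column is `(0,0,1)` is a z-rotation. -/
lemma eq_Rz_of_col (g : SO3) (h0 : g.1 0 2 = 0) (h1 : g.1 1 2 = 0) (h2 : g.1 2 2 = 1) :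
    ∃ θ : ℝ, g = Rz θ := by
  obtain ⟨horth, hdet⟩ := Matrix.mem_specialOrthogonalGroup_iff.mp g.2
  set M := g.1 with hM
  have hrow : M * star M = 1 := (Matrix.mem_orthogonalGroup_iff _ _).mp horth
  have hcol : star M * M = 1 := (Matrix.mem_orthogonalGroup_iff' _ _).mp horth
  have col : ∀ i j : Fin 3,
      M 0 i * M 0 j + M 1 i * M 1 j + M 2 i * M 2 j = (1 : Matrix (Fin 3) (Fin 3) ℝ) i j := by
    intro i j
    have h := congrFun (congrFun hcol i) j
    rw [Matrix.mul_apply] at h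
    simp only [Fin.sum_univ_succ, Matrix.star_eq_conjTranspose, Matrix.conjTranspose_apply,
      star_trivial, Finset.sum_empty, Fin.sum_univ_zero, add_zero,
      Fin.succ_zero_eq_one, Fin.succ_one_eq_two] at h
    linarith [h]
  have row : ∀ i j : Fin 3,
      M i 0 * M j 0 + M i 1 * M j 1 + M i 2 * M j 2 = (1 : Matrix (Fin 3) (Fin 3) ℝ) i j := by
    intro i j
    have h := congrFun (congrFun hrow i) j
    rw [Matrix.mul_apply] at h
    simp only [Fin.sum_univ_succ, Matrix.star_eq_conjTranspose, Matrix.conjTranspose_apply,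
      star_trivial, Finset.sum_empty, Fin.sum_univ_zero, add_zero,
      Fin.succ_zero_eq_one, Fin.succ_one_eq_two] at h
    linarith [h]
  have hr22 := row 2 2
  simp only [Matrix.one_apply_eq, h2] at hr22
  have h20 : M 2 0 = 0 := by nlinarith [sq_nonneg (M 2 0), sq_nonneg (M 2 1)]
  have h21 : M 2 1 = 0 := by nlinarith [sq_nonneg (M 2 0), sq_nonneg (M 2 1)]
  have hc00 := col 0 0
  have hc11 := col 1 1
  have hc01 := col 0 1
  simp only [Matrix.one_apply_eq, h20, h21, Matrix.one_apply,
    mul_zero, add_zero, zero_mul] at hc00 hc11 hc01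
  norm_num at hc01
  have hdet3 : M.det = 1 := hdet
  rw [Matrix.det_fin_three] at hdet3
  rw [h0, h1, h2, h20, h21] at hdet3
  have hd : M 0 0 * M 1 1 - M 0 1 * M 1 0 = 1 := by linarith [hdet3]
  have key : (M 0 0 - M 1 1) ^ 2 + (M 0 1 + M 1 0) ^ 2 = 0 := by
    linear_combination hc00 + hc11 - 2 * hd
  have s1 : (M 0 0 - M 1 1) ^ 2 = 0 := by
    linarith [key, sq_nonneg (M 0 1 + M 1 0), sq_nonneg (M 0 0 - M 1 1)]
  have s2 : (M 0 1 + M 1 0) ^ 2 = 0 := by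
    linarith [key, sq_nonneg (M 0 1 + M 1 0), sq_nonneg (M 0 0 - M 1 1)]
  have e11 : M 1 1 = M 0 0 := by
    have := pow_eq_zero_iff (n := 2) (by norm_num) |>.mp s1
    linarith
  have e01 : M 0 1 = - M 1 0 := by
    have := pow_eq_zero_iff (n := 2) (by norm_num) |>.mp s2
    linarith
  -- now find θ with cos θ = M 0 0, sin θ = M 1 0
  set z : ℂ := Complex.mk (M 0 0) (M 1 0) with hz
  have hnormSq : Complex.normSq z = 1 := by
    simp [Complex.normSq_mk, hz]
    nlinarith [hc00]
  have habs : ‖z‖ = 1 := by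
    rw [Complex.norm_def, hnormSq, Real.sqrt_one]
  have hzne : z ≠ 0 := by
    intro hzz
    rw [hzz] at habs
    simp at habs
  have hcos : Real.cos (Complex.arg z) = M 0 0 := by
    rw [Complex.cos_arg hzne, habs, div_one]
  have hsin : Real.sin (Complex.arg z) = M 1 0 := by
    rw [Complex.sin_arg, habs, div_one]
  refine ⟨Complex.arg z, ?_⟩
  apply Subtype.ext
  show M = RzMat (Complex.arg z)
  ext i j
  fin_cases i <;> fin_cases j <;>
    simp [RzMat, hcos, hsin, Matrix.vecHead, Matrix.vecTail] <;>
    first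
      | exact h0 | exact h1 | exact h2 | exact h20 | exact h21
      | linarith [e11] | linarith [e01]

/-- A special orthogonal matrix whose first two entries of the last column vanish
lies in `O(2)`. -/
lemma mem_O2_of_col (g : SO3) (h0 : g.1 0 2 = 0) (h1 : g.1 1 2 = 0) : g ∈ O2 := by
  obtain ⟨horth, hdet⟩ := Matrix.mem_specialOrthogonalGroup_iff.mp g.2
  set M := g.1 with hM
  have hcol : star M * M = 1 := (Matrix.mem_orthogonalGroup_iff' _ _).mp horth
  have h22 : M 0 2 * M 0 2 + M 1 2 * M 1 2 + M 2 2 * M 2 2 = 1 := by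
    have h := congrFun (congrFun hcol 2) 2
    rw [Matrix.mul_apply] at h
    simp only [Fin.sum_univ_succ, Matrix.star_eq_conjTranspose, Matrix.conjTranspose_apply,
      star_trivial, Finset.sum_empty, Fin.sum_univ_zero, add_zero, Matrix.one_apply_eq,
      Fin.succ_zero_eq_one, Fin.succ_one_eq_two] at h
    linarith [h]
  rw [h0, h1] at h22
  have hsq : M 2 2 * M 2 2 = 1 := by linarith
  rcases mul_self_eq_one_iff.mp hsq with hp | hm
  · obtain ⟨θ, hθ⟩ := eq_Rz_of_col g h0 h1 hp
    exact ⟨θ, Or.inl hθ⟩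
  · have k0 : (ρ * g).1 0 2 = 0 := by
      show (rhoMat * M) 0 2 = 0
      simp [rhoMat, Matrix.mul_apply, Fin.sum_univ_succ, h0]
    have k1 : (ρ * g).1 1 2 = 0 := by
      show (rhoMat * M) 1 2 = 0
      simp [rhoMat, Matrix.mul_apply, Fin.sum_univ_succ, h1]
    have k2 : (ρ * g).1 2 2 = 1 := by
      show (rhoMat * M) 2 2 = 1
      simp [rhoMat, Matrix.mul_apply, Fin.sum_univ_succ, hm]
    obtain ⟨θ, hθ⟩ := eq_Rz_of_col (ρ * g) k0 k1 k2
    refine ⟨θ, Or.inr ?_⟩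
    rw [← hθ, ← mul_assoc, rho_sq, one_mul]

/-- For every `n > 2` and every `g ∈ SO(3)`, if the conjugate `g • D_{2n} • g⁻¹` of
the standard dihedral subgroup `D_{2n}` is contained in the standard embedded `O(2)`,
then `g` itself lies in `O(2)`. -/
theorem mem_O2_of_conj_D2n_le_O2 (n : ℕ) (hn : 2 < n) (g : SO3)
    (h : Subgroup.map (MulAut.conj g).toMonoidHom (D2n n) ≤ O2) : g ∈ O2 := by
  have hπ := Real.pi_pos
  have hn0 : (0 : ℝ) < n := by positivity
  set α := 2 * Real.pi / n with hα
  have hα0 : 0 < α := by positivity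
  have hα2 : α < 2 * Real.pi := by
    rw [hα, div_lt_iff₀ hn0]
    have h3 : (3 : ℝ) ≤ n := by exact_mod_cast hn
    nlinarith
  have hRmem : Rz α ∈ D2n n := Subgroup.subset_closure (Set.mem_insert _ _)
  have hconj : g * Rz α * g⁻¹ ∈ O2 := by
    apply h
    exact ⟨Rz α, hRmem, rfl⟩
  obtain ⟨θ, hθ | hθ⟩ := hconj
  · -- `g * Rz α * g⁻¹ = Rz θ`: then the last column of `g⁻¹` is fixed by `Rz α`
    have hm : Rz α * g⁻¹ = g⁻¹ * Rz θ := by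
      rw [← hθ]; group
    have hm' : RzMat α * (g⁻¹).1 = (g⁻¹).1 * RzMat θ := congrArg Subtype.val hm
    set N := (g⁻¹).1 with hN
    have e0 : Real.cos α * N 0 2 - Real.sin α * N 1 2 = N 0 2 := by
      have h' := congrFun (congrFun hm' 0) 2
      simp [RzMat, Matrix.mul_apply, Fin.sum_univ_succ, Matrix.vecHead, Matrix.vecTail] at h'
      linarith [h']
    have e1 : Real.sin α * N 0 2 + Real.cos α * N 1 2 = N 1 2 := by
      have h' := congrFun (congrFun hm' 1) 2
      simp [RzMat, Matrix.mul_apply, Fin.sum_univ_succ, Matrix.vecHead, Matrix.vecTail] at h'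
      linarith [h']
    have hcosα : Real.cos α ≠ 1 := by
      intro hc
      have := (Real.cos_eq_one_iff_of_lt_of_lt (by linarith) hα2).mp hc
      linarith
    have hcoslt : Real.cos α < 1 := lt_of_le_of_ne (Real.cos_le_one α) hcosα
    have hx : N 0 2 = 0 := by
      have h3 : (2 - 2 * Real.cos α) * N 0 2 = 0 := by
        linear_combination (Real.cos α - 1) * e0 + Real.sin α * e1 -
          N 0 2 * Real.sin_sq_add_cos_sq α
      have : (2 - 2 * Real.cos α) ≠ 0 := by nlinarith
      exact (mul_eq_zero.mp h3).resolve_left this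
    have hy : N 1 2 = 0 := by
      have h3 : (2 - 2 * Real.cos α) * N 1 2 = 0 := by
        linear_combination (Real.cos α - 1) * e1 - Real.sin α * e0 -
          N 1 2 * Real.sin_sq_add_cos_sq α
      have : (2 - 2 * Real.cos α) ≠ 0 := by nlinarith
      exact (mul_eq_zero.mp h3).resolve_left this
    have : g⁻¹ ∈ O2 := mem_O2_of_col g⁻¹ hx hy
    simpa using O2.inv_mem this
  · -- `g * Rz α * g⁻¹ = ρ * Rz θ`: squaring gives `Rz (2α) = 1`, contradiction
    exfalso
    have hsq : (ρ * Rz θ) * (ρ * Rz θ) = 1 := by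
      rw [mul_assoc, ← mul_assoc (Rz θ) ρ (Rz θ), Rz_rho, ← mul_assoc, ← mul_assoc,
        rho_sq, one_mul, Rz_add, neg_add_cancel, Rz_zero]
    have h1 : g * (Rz α * Rz α) * g⁻¹ = 1 := by
      have : (g * Rz α * g⁻¹) * (g * Rz α * g⁻¹) = 1 := by rw [hθ]; exact hsq
      rw [← this]; group
    have h2 : Rz (α + α) = 1 := by
      rw [← Rz_add]
      have := h1
      rw [mul_assoc] at this
      calc Rz α * Rz α = g⁻¹ * (g * (Rz α * Rz α) * g⁻¹) * g := by group
        _ = 1 := by rw [h1]; group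
    have hcos : Real.cos (α + α) = 1 := by
      have := congrFun (congrFun (congrArg Subtype.val h2) 0) 0
      simpa [Rz, RzMat, Matrix.one_apply] using this
    have := (Real.cos_eq_one_iff_of_lt_of_lt (by linarith) (by
      rw [hα]
      rw [← add_div, div_lt_iff₀ hn0]
      have h3 : (3 : ℝ) ≤ n := by exact_mod_cast hn
      nlinarith)).mp hcos
    linarith

end
end
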